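/- Let S ⊆ ℝ^d be a nonempty compact convex set, f : S → ℝ continuous and concave, and x₀ ∈ S. Then there exists a finite family of points x^λ ∈ S and weights p(λ) ≥ 0 with ∑_λ p(λ) = 1 and ∑_λ p(λ)·x^λ = x₀ achieving f⋆(x₀) in which every point x^λ is an extreme point of S. -/

import Mathlib

noncomputable section

/-- The convex-roof value `f⋆(x₀)`: the infimum of `∑ p(λ) f(xλ)` over finite
convex decompositions `∑ p(λ) xλ = x₀` with all `xλ ∈ S`. -/
def fstar {d : ℕ} (S : Set (Fin d → ℝ)) (f : (Fin d → ℝ) → ℝ)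
    (x₀ : Fin d → ℝ) : ℝ :=
  sInf {y | ∃ (m : ℕ) (xs : Fin m → Fin d → ℝ) (pr : Fin m → ℝ),
    (∀ i, 0 ≤ pr i) ∧ (∑ i, pr i) = 1 ∧ (∀ i, xs i ∈ S) ∧
    (∑ i, pr i • xs i) = x₀ ∧ y = ∑ i, pr i * f (xs i)}

/-!
For concave `f`, splitting a non-extreme point `a • y + b • z` of a decomposition of `x₀` into
the two points `y, z` (with weights scaled by `a, b`) keeps the barycentre and does not increase
`∑ p f`. To see that such refinements can be carried to the end, lift `S` to the graph
`{(x, f x, g x)}` with a strictly convex `g` (here `∑ xⱼ²`), whose weighted sum strictly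
increases under every split. By Carathéodory the convex hull of this compact graph is compact,
so among its points above `x₀` there is one with minimal `f`-coordinate and, among those, maximal
`g`-coordinate. A decomposition realizing that point consists of extreme points only.
-/

open Set Module Finset

theorem exists_fin_pos_combination_of_mem_convexHull {E : Type*} [AddCommGroup E] [Module ℝ E]
    [FiniteDimensional ℝ E] {s : Set E} {x : E} (hx : x ∈ convexHull ℝ s) :
    ∃ m ≤ finrank ℝ E + 1, ∃ (w : Fin m → ℝ) (z : Fin m → E),
      (∀ i, 0 < w i) ∧ ∑ i, w i = 1 ∧ (∀ i, z i ∈ s) ∧ ∑ i, w i • z i = x := by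
  obtain ⟨ι, _, z, w, hzs, hind, hw0, hw1, hwz⟩ := eq_pos_convex_span_of_mem_convexHull hx
  let e := Fintype.equivFin ι
  refine ⟨Fintype.card ι, ?_, w ∘ e.symm, z ∘ e.symm, fun i => hw0 _, ?_,
    fun i => hzs (mem_range_self _), ?_⟩
  · have := Submodule.finrank_le (vectorSpan ℝ (range z))
    have := hind.card_le_finrank_succ
    omega
  · rwa [← e.symm.sum_comp] at hw1
  · rwa [← e.symm.sum_comp] at hwz

theorem isCompact_convexHull {E : Type*} [AddCommGroup E] [Module ℝ E] [TopologicalSpace E]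
    [IsTopologicalAddGroup E] [ContinuousSMul ℝ E] [FiniteDimensional ℝ E] {s : Set E}
    (hs : IsCompact s) : IsCompact (convexHull ℝ s) := by
  have hull_eq : convexHull ℝ s = ⋃ m ∈ Finset.range (finrank ℝ E + 2),
      (fun p : (Fin m → ℝ) × (Fin m → E) => ∑ i, p.1 i • p.2 i) ''
        (stdSimplex ℝ (Fin m) ×ˢ univ.pi fun _ => s) := by
    ext x
    simp only [mem_iUnion, mem_image, Finset.mem_range, exists_prop]
    constructor
    · intro hx
      obtain ⟨m, hm, w, z, hw0, hw1, hzs, rfl⟩ := exists_fin_pos_combination_of_mem_convexHull hx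
      exact ⟨m, by omega, (w, z), ⟨⟨fun i => (hw0 i).le, hw1⟩, fun i _ => hzs i⟩, rfl⟩
    · rintro ⟨m, -, ⟨w, z⟩, ⟨⟨hw0, hw1⟩, hz⟩, rfl⟩
      exact (convex_convexHull ℝ s).sum_mem (fun i _ => hw0 i) hw1
        fun i _ => subset_convexHull ℝ s (hz i (mem_univ i))
  rw [hull_eq]
  exact (Finset.range _).isCompact_biUnion fun m _ =>
    ((isCompact_stdSimplex ℝ (Fin m)).prod (isCompact_univ_pi fun _ => hs)).image (by fun_prop)

theorem IsCompact.exists_fst_min_snd_max {α β : Type*} [LinearOrder α] [TopologicalSpace α]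
    [OrderClosedTopology α] [LinearOrder β] [TopologicalSpace β] [OrderClosedTopology β]
    {K : Set (α × β)} (hK : IsCompact K) (hne : K.Nonempty) :
    ∃ p ∈ K, ∀ q ∈ K, p.1 ≤ q.1 ∧ (q.1 = p.1 → q.2 ≤ p.2) := by
  obtain ⟨p₀, hp₀, hmin⟩ := hK.exists_isMinOn hne continuous_fst.continuousOn
  obtain ⟨p, ⟨hpK, hp⟩, hmax⟩ := (hK.inter_right (isClosed_eq continuous_fst continuous_const)
    ).exists_isMaxOn ⟨p₀, hp₀, rfl⟩ continuous_snd.continuousOn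
  exact ⟨p, hpK, fun q hq => ⟨hp ▸ hmin hq, fun hq₁ => hmax ⟨hq, hq₁.trans hp⟩⟩⟩

theorem Convex.sum_smul_add_smul_sub_mem {F ι : Type*} [AddCommGroup F] [Module ℝ F]
    [Fintype ι] {H : Set F} (hH : Convex ℝ H) {w : ι → ℝ} {z : ι → F} (hw0 : ∀ i, 0 ≤ w i)
    (hw1 : ∑ i, w i = 1) (hz : ∀ i, z i ∈ H) (i : ι) {q : F} (hq : q ∈ H) :
    ∑ j, w j • z j + w i • (q - z i) ∈ H := by
  classical
  convert hH.sum_mem (fun j _ => hw0 j) hw1 (z := Function.update z i q) fun j _ => ?_ using 1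
  · have hsplit (u : ι → F) : ∑ j, w j • u j = w i • u i + ∑ j ∈ univ.erase i, w j • u j :=
      (add_sum_erase _ _ (mem_univ i)).symm
    have hrest : ∑ j ∈ univ.erase i, w j • Function.update z i q j
        = ∑ j ∈ univ.erase i, w j • z j :=
      sum_congr rfl fun j hj => by rw [Function.update_of_ne (ne_of_mem_erase hj)]
    rw [hsplit z, hsplit (Function.update z i q), Function.update_self, hrest, smul_sub]
    abel
  · rcases eq_or_ne j i with rfl | hj
    · simpa using hq
    · simpa [hj] using hz j

theorem strictConvexOn_univ_sum_sq {ι : Type*} [Fintype ι] :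
    StrictConvexOn ℝ univ fun x : ι → ℝ => ∑ i, x i ^ 2 := by
  refine ⟨convex_univ, fun x _ y _ hxy a b ha hb hab => ?_⟩
  obtain ⟨j, hj⟩ := Function.ne_iff.mp hxy
  have gap : a • ∑ i, x i ^ 2 + b • ∑ i, y i ^ 2 - ∑ i, (a • x + b • y) i ^ 2
      = ∑ i, a * b * (x i - y i) ^ 2 := by
    simp only [smul_eq_mul, Pi.add_apply, Pi.smul_apply, mul_sum, ← sum_add_distrib,
      ← sum_sub_distrib]
    refine sum_congr rfl fun i _ => ?_
    obtain rfl : b = 1 - a := by linarith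
    ring
  rw [← sub_pos, gap]
  exact sum_pos' (fun i _ => by positivity)
    ⟨j, mem_univ j, by have := sub_ne_zero.mpr hj; positivity⟩

section Graph

variable {E : Type*} [AddCommGroup E] [Module ℝ E] {S : Set E} {f g : E → ℝ}

def graphMap (f g : E → ℝ) (x : E) : E × ℝ × ℝ := (x, f x, g x)

theorem sum_smul_graphMap {ι : Type*} [Fintype ι] (w : ι → ℝ) (x : ι → E) :
    ∑ i, w i • graphMap f g (x i)
      = (∑ i, w i • x i, ∑ i, w i * f (x i), ∑ i, w i * g (x i)) := by
  ext <;> simp [graphMap, Prod.fst_sum, Prod.snd_sum]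

theorem exists_mem_convexHull_graphMap_of_notMem_extremePoints (hf : ConcaveOn ℝ S f)
    (hg : StrictConvexOn ℝ S g) {ι : Type*} [Fintype ι] {w : ι → ℝ} {x : ι → E}
    (hw0 : ∀ i, 0 < w i) (hw1 : ∑ i, w i = 1) (hx : ∀ i, x i ∈ S) {i : ι}
    (hi : x i ∉ S.extremePoints ℝ) :
    ∃ P ∈ convexHull ℝ (graphMap f g '' S), P.1 = ∑ j, w j • x j ∧
      P.2.1 ≤ ∑ j, w j * f (x j) ∧ ∑ j, w j * g (x j) < P.2.2 := by
  obtain ⟨y, hy, z, hz, hseg, hyx⟩ : ∃ y ∈ S, ∃ z ∈ S, x i ∈ openSegment ℝ y z ∧ y ≠ x i := by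
    simpa [mem_extremePoints_iff_left, hx i] using hi
  have hyz : y ≠ z := by
    rintro rfl
    rw [openSegment_same] at hseg
    exact hyx (mem_singleton_iff.mp hseg).symm
  obtain ⟨a, b, ha, hb, hab, hxi⟩ := hseg
  have hG : ∀ u ∈ S, graphMap f g u ∈ convexHull ℝ (graphMap f g '' S) := fun u hu =>
    subset_convexHull ℝ _ (mem_image_of_mem _ hu)
  refine ⟨_, (convex_convexHull ℝ _).sum_smul_add_smul_sub_mem (fun j => (hw0 j).le) hw1
    (fun j => hG _ (hx j)) i ((convex_convexHull ℝ _) (hG y hy) (hG z hz) ha.le hb.le hab), ?_⟩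
  have hfi := hf.2 hy hz ha.le hb.le hab
  have hgi := hg.2 hy hz hyz ha hb hab
  have hwi := hw0 i
  rw [sum_smul_graphMap, ← hxi]
  simp only [graphMap, Prod.fst_add, Prod.snd_add, Prod.fst_sub, Prod.snd_sub,
    Prod.smul_fst, Prod.smul_snd, Prod.smul_mk, smul_eq_mul] at hfi hgi ⊢
  exact ⟨by simp, by nlinarith, by nlinarith⟩

theorem exists_extremePoints_combination_minimizing [TopologicalSpace E]
    [IsTopologicalAddGroup E] [ContinuousSMul ℝ E] [T1Space E] [FiniteDimensional ℝ E]
    (hS : IsCompact S) (hf : ContinuousOn f S) (hconc : ConcaveOn ℝ S f) (hg : ContinuousOn g S)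
    (hgconv : StrictConvexOn ℝ S g) {x₀ : E} (hx₀ : x₀ ∈ S) :
    ∃ (m : ℕ) (w : Fin m → ℝ) (x : Fin m → E), (∀ i, 0 ≤ w i) ∧ ∑ i, w i = 1 ∧
      (∀ i, x i ∈ S.extremePoints ℝ) ∧ ∑ i, w i • x i = x₀ ∧
      ∀ (m' : ℕ) (w' : Fin m' → ℝ) (x' : Fin m' → E), (∀ i, 0 ≤ w' i) → ∑ i, w' i = 1 →
        (∀ i, x' i ∈ S) → ∑ i, w' i • x' i = x₀ →
        ∑ i, w i * f (x i) ≤ ∑ i, w' i * f (x' i) := by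
  set H := convexHull ℝ (graphMap f g '' S)
  have hH : IsCompact H :=
    isCompact_convexHull (hS.image_of_continuousOn (continuousOn_id.prodMk (hf.prodMk hg)))
  set K : Set (ℝ × ℝ) := Prod.snd '' (H ∩ Prod.fst ⁻¹' {x₀})
  have hK : IsCompact K :=
    (hH.inter_right (isClosed_singleton.preimage continuous_fst)).image continuous_snd
  have mem_K {P : E × ℝ × ℝ} (hP : P ∈ H) (hP₁ : P.1 = x₀) : P.2 ∈ K := ⟨P, ⟨hP, hP₁⟩, rfl⟩
  have combination_mem_H (m : ℕ) (w : Fin m → ℝ) (x : Fin m → E) (hw0 : ∀ i, 0 ≤ w i)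
      (hw1 : ∑ i, w i = 1) (hx : ∀ i, x i ∈ S) : ∑ i, w i • graphMap f g (x i) ∈ H :=
    (convex_convexHull ℝ _).sum_mem (fun i _ => hw0 i) hw1
      fun i _ => subset_convexHull ℝ _ (mem_image_of_mem _ (hx i))
  obtain ⟨-, ⟨P, ⟨hPH, hP₁⟩, rfl⟩, hopt⟩ :=
    hK.exists_fst_min_snd_max ⟨_, mem_K (subset_convexHull ℝ _ (mem_image_of_mem _ hx₀)) rfl⟩
  obtain ⟨m, -, w, Q, hw0, hw1, hQ, hwQ⟩ := exists_fin_pos_combination_of_mem_convexHull hPH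
  choose x hxS hxQ using hQ
  obtain rfl : Q = fun i => graphMap f g (x i) := funext fun i => (hxQ i).symm
  rw [sum_smul_graphMap] at hwQ
  subst hwQ
  refine ⟨m, w, x, fun i => (hw0 i).le, hw1, fun i => ?_, hP₁, ?_⟩
  · by_contra hi
    obtain ⟨P', hP'H, hP'₁, hP'f, hP'g⟩ :=
      exists_mem_convexHull_graphMap_of_notMem_extremePoints hconc hgconv hw0 hw1 hxS hi
    have := hopt _ (mem_K hP'H (hP'₁.trans hP₁))
    exact (this.2 (le_antisymm hP'f this.1)).not_gt hP'g
  · intro m' w' x' hw0' hw1' hx' hwx'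
    have := combination_mem_H m' w' x' hw0' hw1' hx'
    rw [sum_smul_graphMap] at this
    exact (hopt _ (mem_K this hwx')).1

end Graph

theorem fstar_attained_extreme_points {d : ℕ} (S : Set (Fin d → ℝ))
    (f : (Fin d → ℝ) → ℝ) (hScomp : IsCompact S)
    (hf : ContinuousOn f S) (hconc : ConcaveOn ℝ S f)
    (x₀ : Fin d → ℝ) (hx₀ : x₀ ∈ S) :
    ∃ (m : ℕ) (xs : Fin m → Fin d → ℝ) (pr : Fin m → ℝ),
      (∀ i, 0 ≤ pr i) ∧ (∑ i, pr i) = 1 ∧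
      (∀ i, xs i ∈ Set.extremePoints ℝ S) ∧
      (∑ i, pr i • xs i) = x₀ ∧ (∑ i, pr i * f (xs i)) = fstar S f x₀ := by
  obtain ⟨m, pr, xs, hpr0, hpr1, hext, hsum, hmin⟩ :=
    exists_extremePoints_combination_minimizing hScomp hf hconc (by fun_prop)
      (strictConvexOn_univ_sum_sq.subset (subset_univ S) hconc.1) hx₀
  refine ⟨m, xs, pr, hpr0, hpr1, hext, hsum, (IsLeast.csInf_eq ⟨?_, ?_⟩).symm⟩
  · exact ⟨m, xs, pr, hpr0, hpr1, fun i => (hext i).1, hsum, rfl⟩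
  · rintro _ ⟨m', xs', pr', hpr0', hpr1', hxs', hsum', rfl⟩
    exact hmin m' pr' xs' hpr0' hpr1' hxs' hsum'

end
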